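/- In the Knödel graph W_{⌊log₂ n⌋, n} (n even), for any two vertices (α,β) and (γ,δ), an ascending path from (γ,δ) to (α,β) exists if and only if the interval R((α,β);(γ,δ)) ≤ 2^{⌊log₂ n⌋ − 1} − 1. -/

import Mathlib

/-- A labeled (multi)graph: `m` edges indexed by `Fin m`, each edge being an
unordered pair of vertices (a call), labeled by the time at which the call occurs. -/
structure LabeledGraph (V : Type) where
  m : ℕ
  ends : Fin m → Sym2 V
  label : Fin m → ℕ

namespace LabeledGraph

variable {V : Type}

lemma pos_right_of_fin {a b : ℕ} (e : Fin (a * b)) : 0 < b := by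
  rcases Nat.eq_zero_or_pos b with h | h
  · exact absurd e.isLt (by simp [h])
  · exact h

/-- The maximal label occurring in `G`. -/
def maxLabel (G : LabeledGraph V) : ℕ :=
  Finset.univ.sup fun e => G.label e

/-- `G.IsWalk u v es` : the list of edges `es` forms a walk from `u` to `v`. -/
inductive IsWalk (G : LabeledGraph V) : V → V → List (Fin G.m) → Prop
  | nil (v : V) : IsWalk G v v []
  | cons {u w v : V} {e : Fin G.m} {es : List (Fin G.m)} :
      G.ends e = s(u, w) → IsWalk G w v es → IsWalk G u v (e :: es)

/-- An ascending path from `u` to `v`: a walk whose labels strictly increase. -/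
def IsAscPath (G : LabeledGraph V) (u v : V) (es : List (Fin G.m)) : Prop :=
  G.IsWalk u v es ∧ List.Chain' (· < ·) (es.map G.label)

/-- Number of descents (non-increases) in a list of labels. -/
def descents : List ℕ → ℕ
  | a :: b :: rest => (if b ≤ a then 1 else 0) + descents (b :: rest)
  | _ => 0

/-- An `s`-folded ascending path from `u` to `v`: a walk using `s`-many “folds”,
i.e. a concatenation of `s+1` maximal ascending subpaths. -/
def IsFoldedPath (G : LabeledGraph V) (u v : V) (es : List (Fin G.m)) (s : ℕ) : Prop :=
  G.IsWalk u v es ∧ es.Nodup ∧ descents (es.map G.label) = s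

/-- `G` is a `k`-fault-tolerant gossip graph: after deleting any `≤ k` edges, every
ordered pair of vertices is still joined by an ascending path. -/
def IsFaultTolerant (G : LabeledGraph V) (k : ℕ) : Prop :=
  ∀ F : Finset (Fin G.m), F.card ≤ k →
    ∀ u v : V, ∃ es : List (Fin G.m), G.IsAscPath u v es ∧ ∀ e ∈ es, e ∉ F

/-- Edge sum of two labeled graphs: labels of `G₂` are shifted above those of `G₁`. -/
def edgeSum (G₁ G₂ : LabeledGraph V) : LabeledGraph V where
  m := G₁.m + G₂.m
  ends := fun e =>
    if hlt : e.val < G₁.m then G₁.ends ⟨e.val, hlt⟩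
    else G₂.ends ⟨e.val - G₁.m, by have := e.isLt; omega⟩
  label := fun e =>
    if hlt : e.val < G₁.m then G₁.label ⟨e.val, hlt⟩
    else G₂.label ⟨e.val - G₁.m, by have := e.isLt; omega⟩ + G₁.maxLabel

/-- Edge sum `hG` of `h` identical copies of `G`; the `i`-th copy has labels shifted
up by `i · maxLabel G`. -/
def hCopy (G : LabeledGraph V) (h : ℕ) : LabeledGraph V where
  m := h * G.m
  ends := fun e => G.ends ⟨e.val % G.m, Nat.mod_lt _ (pos_right_of_fin e)⟩
  label := fun e =>
    G.label ⟨e.val % G.m, Nat.mod_lt _ (pos_right_of_fin e)⟩ + (e.val / G.m) * G.maxLabel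

/-- The copy of an edge `e` of `G` in the `i`-th copy inside `hG`. -/
def copyEdge (G : LabeledGraph V) {h : ℕ} (i : Fin h) (e : Fin G.m) : Fin (G.hCopy h).m :=
  ⟨i.val * G.m + e.val, by
    show i.val * G.m + e.val < h * G.m
    calc i.val * G.m + e.val < (i.val + 1) * G.m := by rw [Nat.succ_mul]; omega
    _ ≤ h * G.m := Nat.mul_le_mul_right _ i.isLt⟩

/-- `τ(n,k)`: the minimum number of edges (calls) of a `k`-fault-tolerant gossip
graph (scheme) on `n` nodes. -/
noncomputable def tau (n k : ℕ) : ℕ :=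
  sInf {c | ∃ G : LabeledGraph (Fin n), G.m = c ∧ G.IsFaultTolerant k}

/-- The Knödel graph `W_{Δ,n}` on `n = 2h` vertices: for each `j < h` and each
`l ∈ {1,…,Δ}` an edge labeled `l` between `(1,j)` and `(2, (j + 2^{l-1} - 1) mod h)`
(here `Fin 2` value `0` plays the role of `1`, and `1` the role of `2`). -/
def knodel (Δ h : ℕ) : LabeledGraph (Fin 2 × Fin h) where
  m := Δ * h
  ends := fun e =>
    have hh : 0 < h := pos_right_of_fin e
    s( ((0 : Fin 2), ⟨e.val % h, Nat.mod_lt _ hh⟩),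
       ((1 : Fin 2), ⟨(e.val % h + (2 ^ (e.val / h) - 1)) % h, Nat.mod_lt _ hh⟩) )
  label := fun e => e.val / h + 1

/-- The interval `R((α,β);(γ,δ))` in the Knödel graph on `2h` vertices (it does not
depend on `γ`); vertex class `0` plays the role of `1`, class `1` the role of `2`. -/
def knodelInterval (h : ℕ) (α : Fin 2) (β δ : ℕ) : ℕ :=
  if α = 0 then (if β ≤ δ then δ - β else h - (β - δ))
  else (if δ ≤ β then β - δ else h - (δ - β))

/-- The labeled wheel graph on `n = 2k+1` vertices: center `none` (vertex `u`),
rim vertices `some (i, 0) = vᵢ` and `some (i, 1) = vᵢ'`; edges `(vᵢ,vᵢ')` labeled 1,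
`(vᵢ',u)` labeled 2, `(vᵢ,u)` labeled 3, `(vᵢ', v_{i+1})` labeled 4. -/
def wheel (k : ℕ) : LabeledGraph (Option (Fin k × Fin 2)) where
  m := 4 * k
  ends := fun e =>
    have hk : 0 < k := pos_right_of_fin e
    let i : Fin k := ⟨e.val % k, Nat.mod_lt _ hk⟩
    if e.val / k = 0 then s(some (i, 0), some (i, 1))
    else if e.val / k = 1 then s(some (i, 1), none)
    else if e.val / k = 2 then s(some (i, 0), none)
    else s(some (i, 1), some (⟨(i.val + 1) % k, Nat.mod_lt _ hk⟩, 0))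
  label := fun e => e.val / k + 1

/-- A labeled graph is a valid (timed) schedule when simultaneous calls form a
matching: no two distinct edges with the same label share a vertex. -/
def IsMatchingSchedule (G : LabeledGraph V) : Prop :=
  ∀ e e' : Fin G.m, e ≠ e' → G.label e = G.label e' →
    ∀ v : V, ¬(v ∈ G.ends e ∧ v ∈ G.ends e')

/-- `T(n,k)`: the minimum completion time of a `k`-fault-tolerant gossip scheme on
`n` nodes in which non-overlapping pairs may call simultaneously. -/
noncomputable def minTime (n k : ℕ) : ℕ :=
  sInf {t | ∃ G : LabeledGraph (Fin n),
    G.IsMatchingSchedule ∧ G.IsFaultTolerant k ∧ G.maxLabel ≤ t}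

end LabeledGraph

/-!
Measure a vertex `v = (c, x)` by its signed offset `ρ v` from the position `δ` of the start
vertex: `δ - x` in class `0` and `x - δ` in class `1`, as an element of `ZMod h`; the interval
`R((α,β);(γ,δ))` is the representative in `[0, h)` of `ρ (α, β)`. The two endpoints of an edge
with label `a + 1` satisfy `ρ p + ρ q = 2 ^ a - 1`, so an ascending path with exponents
`a₁ < ⋯ < a_k` leaves the start (where `ρ = 0`) and ends at the value obtained by applying the
reflections `y ↦ 2 ^ aᵢ - 1 - y` in turn, while its length fixes the class of the end vertex.
Over `ℤ` this value lies in `[0, 2 ^ a_k)`, and conversely every value in `[0, 2 ^ (Δ - 1))` is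
reached by exponent lists below `Δ` of either parity: split off the top exponent `Δ - 1` and
recurse on `2 ^ (Δ - 1) - 1 - y`. As `2 ^ (Δ - 1) ≤ h`, the residue of `ρ (α, β)` decides.
-/

section OffsetAfter

variable {R : Type*} [Ring R]

def offsetAfter (x : R) (as : List ℕ) : R :=
  as.foldl (fun y a => 2 ^ a - 1 - y) x

@[simp] lemma offsetAfter_nil (x : R) : offsetAfter x [] = x := rfl

@[simp] lemma offsetAfter_cons (x : R) (a : ℕ) (as : List ℕ) :
    offsetAfter x (a :: as) = offsetAfter (2 ^ a - 1 - x) as := rfl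

lemma offsetAfter_append_singleton (x : R) (as : List ℕ) (b : ℕ) :
    offsetAfter x (as ++ [b]) = 2 ^ b - 1 - offsetAfter x as :=
  List.foldl_append

lemma intCast_offsetAfter (x : ℤ) (as : List ℕ) :
    ((offsetAfter x as : ℤ) : R) = offsetAfter (x : R) as := by
  induction as generalizing x with
  | nil => rfl
  | cons a as ih => simp [ih]

end OffsetAfter

lemma offsetAfter_mem_Ico {as : List ℕ} (has : as.Pairwise (· < ·)) {N : ℕ}
    (hN : ∀ a ∈ as, a < N) :
    0 ≤ offsetAfter (0 : ℤ) as ∧ offsetAfter (0 : ℤ) as < 2 ^ (N - 1) := by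
  induction as using List.reverseRecOn generalizing N with
  | nil => simp
  | append_singleton as b ih =>
    rw [List.pairwise_append] at has
    obtain ⟨has, -, hb⟩ := has
    obtain ⟨h0, hlt⟩ := ih has (N := b) fun a ha => hb a ha b List.mem_cons_self
    have hbN : b ≤ N - 1 := by have := hN b (by simp); omega
    have h1 : (2 : ℤ) ^ (b - 1) ≤ 2 ^ b := pow_le_pow_right₀ one_le_two (Nat.sub_le b 1)
    have h2 : (2 : ℤ) ^ b ≤ 2 ^ (N - 1) := pow_le_pow_right₀ one_le_two hbN
    rw [offsetAfter_append_singleton]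
    constructor <;> linarith

lemma exists_offsetAfter_eq {N : ℕ} (hN : 1 ≤ N) (n : ℕ) {x : ℤ} (hx0 : 0 ≤ x)
    (hxN : x < 2 ^ (N - 1)) :
    ∃ as : List ℕ, as.Pairwise (· < ·) ∧ (∀ a ∈ as, a < N) ∧ as.length % 2 = n % 2 ∧
      offsetAfter 0 as = x := by
  induction N, hN using Nat.le_induction generalizing n x with
  | base =>
    obtain rfl : x = 0 := by simp at hxN; omega
    rcases Nat.mod_two_eq_zero_or_one n with hn | hn
    · exact ⟨[], by simp, by simp, by simp [hn], rfl⟩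
    · exact ⟨[0], by simp, by simp, by simp [hn], by simp⟩
  | succ N hN ih =>
    by_cases hx : x < 2 ^ (N - 1)
    · obtain ⟨as, has, hlt, hlen, hval⟩ := ih n hx0 hx
      exact ⟨as, has, fun a ha => (hlt a ha).trans N.lt_succ_self, hlen, hval⟩
    · rw [Nat.add_sub_cancel] at hxN
      have hpow : (2 : ℤ) ^ N = 2 * 2 ^ (N - 1) := by
        rw [← pow_succ']; congr 1; omega
      obtain ⟨as, has, hlt, hlen, hval⟩ :=
        ih (n + 1) (x := 2 ^ N - 1 - x) (by linarith) (by linarith)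
      refine ⟨as ++ [N], ?_, ?_, ?_, ?_⟩
      · exact List.pairwise_append.2 ⟨has, by simp, fun a ha b hb => by simp_all⟩
      · simp only [List.mem_append, List.mem_singleton]
        rintro a (ha | rfl)
        · exact (hlt a ha).trans N.lt_succ_self
        · exact Nat.lt_succ_self _
      · simp only [List.length_append, List.length_singleton]; omega
      · rw [offsetAfter_append_singleton, hval]; ring

lemma Fin.natCast_zmod_injective (h : ℕ) : Function.Injective fun x : Fin h => (x : ZMod h) := by
  intro x y hxy
  simp only [ZMod.natCast_eq_natCast_iff', Nat.mod_eq_of_lt x.isLt, Nat.mod_eq_of_lt y.isLt]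
    at hxy
  exact Fin.ext hxy

namespace LabeledGraph

variable {Δ h : ℕ}

def knodelOffset (δ : Fin h) (v : Fin 2 × Fin h) : ZMod h :=
  if v.1 = 0 then (δ : ZMod h) - (v.2 : ZMod h) else (v.2 : ZMod h) - (δ : ZMod h)

lemma knodelOffset_self (δ : Fin h) (c : Fin 2) : knodelOffset δ (c, δ) = 0 := by
  simp [knodelOffset]

lemma knodelOffset_injective {δ x y : Fin h} {c : Fin 2}
    (hxy : knodelOffset δ (c, x) = knodelOffset δ (c, y)) : x = y := by
  apply Fin.natCast_zmod_injective h
  unfold knodelOffset at hxy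
  split_ifs at hxy
  · exact sub_right_injective hxy
  · exact sub_left_injective hxy

lemma knodelInterval_lt (α : Fin 2) (β δ : Fin h) : knodelInterval h α β δ < h := by
  have := β.isLt; have := δ.isLt
  unfold knodelInterval
  split_ifs <;> omega

lemma natCast_knodelInterval (α : Fin 2) (β δ : Fin h) :
    (knodelInterval h α β δ : ZMod h) = knodelOffset δ (α, β) := by
  have := β.isLt; have := δ.isLt
  unfold knodelInterval knodelOffset
  split_ifs with _ hle hle
  · rw [Nat.cast_sub hle]
  · rw [Nat.cast_sub (by omega : (β : ℕ) - δ ≤ h), Nat.cast_sub (by omega : (δ : ℕ) ≤ β),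
      ZMod.natCast_self, zero_sub, neg_sub]
  · rw [Nat.cast_sub hle]
  · rw [Nat.cast_sub (by omega : (δ : ℕ) - β ≤ h), Nat.cast_sub (by omega : (β : ℕ) ≤ δ),
      ZMod.natCast_self, zero_sub, neg_sub]

lemma knodel_ends (e : Fin (knodel Δ h).m) :
    (knodel Δ h).ends e =
      s((0, ⟨e.val % h, Nat.mod_lt _ (pos_right_of_fin e)⟩),
        (1, ⟨(e.val % h + (2 ^ (e.val / h) - 1)) % h, Nat.mod_lt _ (pos_right_of_fin e)⟩)) :=
  rfl

lemma knodel_label (e : Fin (knodel Δ h).m) : (knodel Δ h).label e = e.val / h + 1 := rfl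

lemma knodel_exponent_lt (e : Fin (knodel Δ h).m) : e.val / h < Δ :=
  Nat.div_lt_of_lt_mul (Nat.mul_comm Δ h ▸ e.isLt)

lemma knodel_edge_spec {e : Fin (knodel Δ h).m} {p q : Fin 2 × Fin h}
    (he : (knodel Δ h).ends e = s(p, q)) (δ : Fin h) :
    q.1 ≠ p.1 ∧ knodelOffset δ p + knodelOffset δ q = 2 ^ (e.val / h) - 1 := by
  have hsum : knodelOffset δ (0, ⟨e.val % h, Nat.mod_lt _ (pos_right_of_fin e)⟩) +
      knodelOffset δ
        (1, ⟨(e.val % h + (2 ^ (e.val / h) - 1)) % h, Nat.mod_lt _ (pos_right_of_fin e)⟩) =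
      2 ^ (e.val / h) - 1 := by
    simp [knodelOffset, Nat.cast_sub Nat.one_le_two_pow]
  rw [knodel_ends, Sym2.eq_iff] at he
  rcases he with ⟨rfl, rfl⟩ | ⟨rfl, rfl⟩
  · exact ⟨one_ne_zero, hsum⟩
  · exact ⟨zero_ne_one, by rw [add_comm]; exact hsum⟩

lemma IsWalk.knodel_fst_knodelOffset {u v : Fin 2 × Fin h} {es : List (Fin (knodel Δ h).m)}
    (hw : (knodel Δ h).IsWalk u v es) (δ : Fin h) :
    (v.1 : ℕ) = (u.1 + es.length) % 2 ∧
      knodelOffset δ v = offsetAfter (knodelOffset δ u) (es.map (·.val / h)) := by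
  induction hw with
  | nil v => simp [Nat.mod_eq_of_lt v.1.isLt]
  | @cons u w v e es he _ ih =>
    obtain ⟨hcls, hsum⟩ := knodel_edge_spec he δ
    obtain ⟨ihcls, ihoff⟩ := ih
    have := Fin.val_ne_of_ne hcls
    have := u.1.isLt; have := w.1.isLt
    refine ⟨by simp only [List.length_cons]; omega, ?_⟩
    rw [ihoff, List.map_cons, offsetAfter_cons, ← hsum, add_sub_cancel_left]

lemma exists_knodel_edge_of_fst_eq_zero {a : ℕ} (ha : a < Δ) (j : Fin h) :
    ∃ (e : Fin (knodel Δ h).m) (j' : Fin h), e.val / h = a ∧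
      (j' : ZMod h) = j + (2 ^ a - 1) ∧ (knodel Δ h).ends e = s((0, j), (1, j')) := by
  have hj := j.isLt
  let e : Fin (knodel Δ h).m := ⟨a * h + j, by show a * h + j < Δ * h; nlinarith⟩
  have hdiv : e.val / h = a := by
    show (a * h + j) / h = a
    rw [Nat.mul_comm, Nat.mul_add_div (by omega), Nat.div_eq_of_lt hj, add_zero]
  have hmod : e.val % h = j := by
    show (a * h + j) % h = j
    rw [Nat.mul_add_mod_self_right, Nat.mod_eq_of_lt hj]
  refine ⟨e, ⟨(j + (2 ^ a - 1)) % h, Nat.mod_lt _ (by omega)⟩, hdiv, ?_, ?_⟩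
  · simp [Nat.cast_sub Nat.one_le_two_pow]
  · rw [knodel_ends]; simp only [hmod, hdiv]

lemma exists_knodel_edge (hh : 0 < h) (p : Fin 2 × Fin h) {a : ℕ} (ha : a < Δ) :
    ∃ (e : Fin (knodel Δ h).m) (q : Fin 2 × Fin h), e.val / h = a ∧
      (knodel Δ h).ends e = s(p, q) := by
  have : NeZero h := ⟨hh.ne'⟩
  obtain ⟨c, x⟩ := p
  rcases Fin.exists_fin_two.mp ⟨c, rfl⟩ with rfl | rfl
  · obtain ⟨e, j', he, -, hends⟩ := exists_knodel_edge_of_fst_eq_zero ha x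
    exact ⟨e, _, he, hends⟩
  · obtain ⟨e, j', he, hj', hends⟩ :=
      exists_knodel_edge_of_fst_eq_zero ha ⟨((x : ZMod h) - (2 ^ a - 1)).val, ZMod.val_lt _⟩
    obtain rfl : j' = x := Fin.natCast_zmod_injective h <| by simpa using hj'
    exact ⟨e, _, he, hends.trans (Sym2.eq_swap)⟩

lemma exists_knodel_walk (hh : 0 < h) (u : Fin 2 × Fin h) {as : List ℕ}
    (has : ∀ a ∈ as, a < Δ) :
    ∃ (es : List (Fin (knodel Δ h).m)) (v : Fin 2 × Fin h),
      (knodel Δ h).IsWalk u v es ∧ es.map (·.val / h) = as := by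
  induction as generalizing u with
  | nil => exact ⟨[], u, .nil u, rfl⟩
  | cons a as ih =>
    obtain ⟨e, w, he, hends⟩ := exists_knodel_edge hh u (has a List.mem_cons_self)
    obtain ⟨es, v, hw, hes⟩ := ih w fun b hb => has b (List.mem_cons_of_mem a hb)
    exact ⟨e :: es, v, .cons hends hw, by simp [he, hes]⟩

lemma knodel_chain_label_iff (es : List (Fin (knodel Δ h).m)) :
    (es.map (knodel Δ h).label).IsChain (· < ·) ↔ (es.map (·.val / h)).Pairwise (· < ·) := by
  simp only [List.isChain_iff_pairwise, List.pairwise_map, knodel_label,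
    Nat.add_lt_add_iff_right]

lemma knodel_exists_isAscPath_iff (hh : 0 < h) (α γ : Fin 2) (β δ : Fin h) :
    (∃ es, (knodel Δ h).IsAscPath (γ, δ) (α, β) es) ↔
      ∃ as : List ℕ, as.Pairwise (· < ·) ∧ (∀ a ∈ as, a < Δ) ∧
        (α : ℕ) = (γ + as.length) % 2 ∧ knodelOffset δ (α, β) = offsetAfter 0 as := by
  constructor
  · rintro ⟨es, hw, hasc⟩
    obtain ⟨hcls, hoff⟩ := hw.knodel_fst_knodelOffset δ
    rw [knodelOffset_self] at hoff
    refine ⟨es.map (·.val / h), (knodel_chain_label_iff es).1 hasc, ?_, by simpa using hcls, hoff⟩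
    simp only [List.mem_map]
    rintro _ ⟨e, -, rfl⟩
    exact knodel_exponent_lt e
  · rintro ⟨as, has, hlt, hcls, hoff⟩
    obtain ⟨es, ⟨c, x⟩, hw, rfl⟩ := exists_knodel_walk hh (γ, δ) hlt
    obtain ⟨hvcls, hvoff⟩ := hw.knodel_fst_knodelOffset δ
    rw [knodelOffset_self, ← hoff] at hvoff
    obtain rfl : c = α := Fin.ext (by simp_all)
    obtain rfl : x = β := knodelOffset_injective hvoff
    exact ⟨es, hw, (knodel_chain_label_iff es).2 has⟩

end LabeledGraph

open LabeledGraph in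
theorem knodel_asc_path_iff_interval_general (h : ℕ)
    (α γ : Fin 2) (β δ : Fin h) :
    (∃ es : List (Fin (knodel (Nat.log 2 (2 * h)) h).m),
        (knodel (Nat.log 2 (2 * h)) h).IsAscPath (γ, δ) (α, β) es)
      ↔ knodelInterval h α β.val δ.val ≤ 2 ^ (Nat.log 2 (2 * h) - 1) - 1 := by
  have hh : 0 < h := β.pos
  set Δ := Nat.log 2 (2 * h)
  have hΔ : 1 ≤ Δ := Nat.log_pos one_lt_two (by omega)
  have hΔh : 2 ^ (Δ - 1) ≤ h := by
    have : 2 ^ Δ ≤ 2 * h := Nat.pow_log_le_self 2 (by omega)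
    rw [← Nat.sub_add_cancel hΔ, pow_succ] at this
    omega
  have hRh := knodelInterval_lt α β δ
  have hpow : ((2 ^ (Δ - 1) : ℕ) : ℤ) = 2 ^ (Δ - 1) := Nat.cast_pow 2 (Δ - 1)
  have := Nat.one_le_two_pow (n := Δ - 1)
  rw [knodel_exists_isAscPath_iff hh, ← natCast_knodelInterval]
  constructor
  · rintro ⟨as, has, hlt, -, hR⟩
    obtain ⟨h0, hN⟩ := offsetAfter_mem_Ico has hlt
    rw [← Int.cast_zero, ← intCast_offsetAfter, ← Int.cast_natCast,
      ZMod.intCast_eq_intCast_iff', Int.emod_eq_of_lt (by positivity) (by omega),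
      Int.emod_eq_of_lt h0 (by omega)] at hR
    omega
  · intro hRΔ
    obtain ⟨as, has, hlt, hlen, hval⟩ :=
      exists_offsetAfter_eq hΔ (α + γ) (x := knodelInterval h α β δ) (by positivity) (by omega)
    refine ⟨as, has, hlt, by omega, ?_⟩
    rw [← Int.cast_zero, ← intCast_offsetAfter, hval, Int.cast_natCast]

open LabeledGraph in
/-- In `W_{⌊log₂ n⌋,n}` (`n = 2h` even), an ascending path from
`(γ,δ)` to `(α,β)` exists iff `R((α,β);(γ,δ)) ≤ 2^{⌊log₂ n⌋−1} − 1`. -/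
theorem knodel_asc_path_iff_interval (h : ℕ) (hh : 0 < h)
    (α γ : Fin 2) (β δ : Fin h) :
    (∃ es : List (Fin (knodel (Nat.log 2 (2 * h)) h).m),
        (knodel (Nat.log 2 (2 * h)) h).IsAscPath (γ, δ) (α, β) es)
      ↔ knodelInterval h α β.val δ.val ≤ 2 ^ (Nat.log 2 (2 * h) - 1) - 1 :=
  knodel_asc_path_iff_interval_general h α γ β δ
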